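/- Let N be a complete nest, L a weakly closed Lie T(N)-module, K(L) the T(N)-bimodule of the structure theorem, and φ a left order continuous homomorphism on N with K(L) = {T : φ(P)^⊥ T P = 0 for all P ∈ N}. If P ∈ N satisfies φ(P) < P, then for all T ∈ L and all Q ∈ N with φ(P) < Q < P, one has (Q − φ(P)) T (P − Q) = 0. -/

import Mathlib

/-- The order on orthogonal projections: `P ≤ Q` encoded as `P*Q = P ∧ Q*P = P`. -/
def opLe {H : Type} [NormedAddCommGroup H] [InnerProductSpace ℂ H]
    (P Q : H →L[ℂ] H) : Prop := P * Q = P ∧ Q * P = P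

/-- Strict order on projections. -/
def opLt {H : Type} [NormedAddCommGroup H] [InnerProductSpace ℂ H]
    (P Q : H →L[ℂ] H) : Prop := opLe P Q ∧ P ≠ Q

/-- A complete nest: a totally ordered complete sublattice of the lattice of orthogonal
projections on `H`, containing `0` and `1`.  Completeness means that every subset has a
least upper bound and a greatest lower bound (computed in the full projection lattice)
belonging to the nest. -/
structure IsNest {H : Type} [NormedAddCommGroup H] [InnerProductSpace ℂ H] [CompleteSpace H]
    (N : Set (H →L[ℂ] H)) : Prop where
  proj : ∀ P ∈ N, IsSelfAdjoint P ∧ IsIdempotentElem P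
  zero_mem : (0 : H →L[ℂ] H) ∈ N
  one_mem : (1 : H →L[ℂ] H) ∈ N
  total : ∀ P ∈ N, ∀ Q ∈ N, opLe P Q ∨ opLe Q P
  complete_sup : ∀ S ⊆ N, ∃ B ∈ N, (∀ P ∈ S, opLe P B) ∧
    ∀ C : H →L[ℂ] H, IsSelfAdjoint C → IsIdempotentElem C → (∀ P ∈ S, opLe P C) → opLe B C
  complete_inf : ∀ S ⊆ N, ∃ B ∈ N, (∀ P ∈ S, opLe B P) ∧
    ∀ C : H →L[ℂ] H, IsSelfAdjoint C → IsIdempotentElem C → (∀ P ∈ S, opLe C P) → opLe C B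

/-- `B` is the supremum, taken in the nest `N`, of the subset `S` of `N`. -/
def IsNestSup {H : Type} [NormedAddCommGroup H] [InnerProductSpace ℂ H]
    (N S : Set (H →L[ℂ] H)) (B : H →L[ℂ] H) : Prop :=
  B ∈ N ∧ (∀ P ∈ S, opLe P B) ∧ ∀ C ∈ N, (∀ P ∈ S, opLe P C) → opLe B C

/-- `B` is the infimum, taken in the nest `N`, of the subset `S` of `N`. -/
def IsNestInf {H : Type} [NormedAddCommGroup H] [InnerProductSpace ℂ H]
    (N S : Set (H →L[ℂ] H)) (B : H →L[ℂ] H) : Prop :=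
  B ∈ N ∧ (∀ P ∈ S, opLe B P) ∧ ∀ C ∈ N, (∀ P ∈ S, opLe C P) → opLe C B

/-- The nest algebra `T(N)` of a nest `N`: all `T` with `P^⊥ T P = 0` for all `P ∈ N`. -/
def nestAlg {H : Type} [NormedAddCommGroup H] [InnerProductSpace ℂ H]
    (N : Set (H →L[ℂ] H)) : Set (H →L[ℂ] H) :=
  {T | ∀ P ∈ N, (1 - P) * T * P = 0}

/-- A subset of `B(H)` is weakly closed if it is closed in the weak operator topology. -/
def WClosed {H : Type} [NormedAddCommGroup H] [InnerProductSpace ℂ H] [CompleteSpace H]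
    (M : Set (H →L[ℂ] H)) : Prop :=
  IsClosed ((ContinuousLinearMapWOT.ofCLM : (H →L[ℂ] H) → ContinuousLinearMapWOT (RingHom.id ℂ) H H) '' M)

/-- The closure of a subset of `B(H)` in the weak operator topology. -/
def wClosure {H : Type} [NormedAddCommGroup H] [InnerProductSpace ℂ H] [CompleteSpace H]
    (S : Set (H →L[ℂ] H)) : Set (H →L[ℂ] H) :=
  (ContinuousLinearMapWOT.ofCLM : (H →L[ℂ] H) → ContinuousLinearMapWOT (RingHom.id ℂ) H H) ⁻¹' (closure ((ContinuousLinearMapWOT.ofCLM : (H →L[ℂ] H) → ContinuousLinearMapWOT (RingHom.id ℂ) H H) '' S))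

/-- The rank-one operator `x ⊗ y : z ↦ ⟨z,x⟩y` (inner product linear in its first variable,
i.e. `⟨z,x⟩ = ⟪x,z⟫` in Mathlib's convention). -/
noncomputable def rankOne {H : Type} [NormedAddCommGroup H] [InnerProductSpace ℂ H]
    (x y : H) : H →L[ℂ] H :=
  (innerSL ℂ x).smulRight y

theorem sub_mul_mul_sub_eq_of_mul_eq {A : Type*} [Ring A] {R Q P : A}
    (hRQ : R * Q = R) (hQP : Q * P = Q) (T : A) :
    (Q - R) * T * (P - Q) = (1 - R) * (Q * T * (1 - Q)) * P := by
  have hleft : (1 - R) * Q = Q - R := by rw [sub_mul, one_mul, hRQ]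
  have hright : (1 - Q) * P = P - Q := by rw [sub_mul, one_mul, hQP]
  rw [← hleft, ← hright]
  noncomm_ring

theorem middle_corner_vanishes_general
    {H : Type} [NormedAddCommGroup H] [InnerProductSpace ℂ H]
    (N : Set (H →L[ℂ] H)) (L : Submodule ℂ (H →L[ℂ] H))
    (K : Set (H →L[ℂ] H))
    (φ : (H →L[ℂ] H) → (H →L[ℂ] H))
    (hKeq : K = {T : H →L[ℂ] H | ∀ P ∈ N, (1 - φ P) * T * P = 0})
    (hQK : ∀ Q ∈ N, ∀ T ∈ L, Q * T * (1 - Q) ∈ K)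
    (P : H →L[ℂ] H) (hP : P ∈ N) :
    ∀ T ∈ L, ∀ Q ∈ N, opLt (φ P) Q → opLt Q P → (Q - φ P) * T * (P - Q) = 0 := by
  intro T hT Q hQ hφQ hQP
  have hcompress : Q * T * (1 - Q) ∈ K := hQK Q hQ T hT
  rw [hKeq] at hcompress
  rw [sub_mul_mul_sub_eq_of_mul_eq hφQ.1.1 hQP.1.1]
  exact hcompress P hP

/-- If `K(L)` is the bimodule of the structure theorem, characterized by a left order
continuous homomorphism `φ` on `N` via `K(L) = {T : φ(P)^⊥ T P = 0 ∀ P ∈ N}`, and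
`P ∈ N` satisfies `φ(P) < P`, then for all `T ∈ L` and all `Q ∈ N` with
`φ(P) < Q < P` one has `(Q − φ(P)) T (P − Q) = 0`. -/
theorem middle_corner_vanishes
    {H : Type} [NormedAddCommGroup H] [InnerProductSpace ℂ H] [CompleteSpace H]
    (N : Set (H →L[ℂ] H)) (hN : IsNest N) (L : Submodule ℂ (H →L[ℂ] H))
    (hLc : WClosed (L : Set (H →L[ℂ] H)))
    (hLie : ∀ T ∈ L, ∀ S ∈ nestAlg N, T * S - S * T ∈ L)
    (K : Set (H →L[ℂ] H)) (hKc : WClosed K)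
    (φ : (H →L[ℂ] H) → (H →L[ℂ] H)) (hφN : ∀ P ∈ N, φ P ∈ N)
    (hφmono : ∀ P₁ ∈ N, ∀ P₂ ∈ N, opLe P₁ P₂ → opLe (φ P₁) (φ P₂))
    (hφcont : ∀ X ⊆ N, ∀ s : H →L[ℂ] H, IsNestSup N X s → IsNestSup N (φ '' X) (φ s))
    (hKeq : K = {T : H →L[ℂ] H | ∀ P ∈ N, (1 - φ P) * T * P = 0})
    (hQK : ∀ Q ∈ N, ∀ T ∈ L, Q * T * (1 - Q) ∈ K)
    (P : H →L[ℂ] H) (hP : P ∈ N) (hφP : opLt (φ P) P) :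
    ∀ T ∈ L, ∀ Q ∈ N, opLt (φ P) Q → opLt Q P → (Q - φ P) * T * (P - Q) = 0 :=
  middle_corner_vanishes_general N L K φ hKeq hQK P hP
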